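/- Let p and a be elements of an associative unital ℂ-algebra R with a invertible, and let i denote the imaginary unit. For u ∈ ℂ let L(u) be the 2×2 matrix over R with rows (u·1 − p, −a) and (a^{-1}, 0). Set L¹(u) = L(u) ⊗ I and L²(v) = I ⊗ L(v) (4×4 Kronecker products over R), and R(u) = u·Id_4 − i·P where P is the permutation (flip) matrix on ℂ²⊗ℂ², regarded as a matrix with central scalar entries. Then the relation L²(v)·L¹(u)·R(u−v) = R(u−v)·L¹(u)·L²(v) holds for all u, v ∈ ℂ if and only if p·a − a·p = −i·a. -/

import Mathlib

/-!
Write `L(u) = u • E + M` with `E = E₁₁` scalar. Conjugation by the flip `P` exchanges the two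
tensor factors, so `P L¹(u) L²(v) = L²(u) L¹(v) P`, and the difference of the two sides of the RLL
relation collapses to `(u - v)` times a matrix that no longer depends on the spectral parameters.
Its sixteen entries say exactly that `[p, a] = -i a`, `[p, a⁻¹] = i a⁻¹` and `[a, a⁻¹] = 0`, and for
a unit `a` the last two follow from the first.
-/

noncomputable section

open Matrix Kronecker

/-- The permutation (flip) matrix `P` on `ℂ² ⊗ ℂ²`. -/
def Pflip : Matrix (Fin 2 × Fin 2) (Fin 2 × Fin 2) ℂ :=
  Matrix.of fun p q => if p.1 = q.2 ∧ p.2 = q.1 then 1 else 0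

/-- The rational R-matrix `R(u) = u·Id₄ − i·P`. -/
def Rmat (u : ℂ) : Matrix (Fin 2 × Fin 2) (Fin 2 × Fin 2) ℂ :=
  u • (1 : Matrix (Fin 2 × Fin 2) (Fin 2 × Fin 2) ℂ) - Complex.I • Pflip

theorem Units.mul_inv_sub_inv_mul_eq_neg_smul {k R : Type*} [CommSemiring k] [Ring R]
    [Algebra k R] {p : R} {a : Rˣ} {r : k} (h : p * a - a * p = r • (a : R)) :
    p * ↑a⁻¹ - ↑a⁻¹ * p = -(r • (↑a⁻¹ : R)) := by
  have hconj : ↑a⁻¹ * (p * a - a * p) * ↑a⁻¹ = ↑a⁻¹ * p - p * ↑a⁻¹ := by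
    simp [mul_sub, sub_mul, mul_assoc]
  rw [h, mul_smul_comm, smul_mul_assoc, Units.inv_mul, one_mul] at hconj
  linear_combination (norm := abel) hconj

theorem lax_rll_sub_eq_smul {k S : Type*} [CommRing k] [Ring S] [Algebra k S]
    {P E₁ E₂ M₁ M₂ : S}
    (hPE₁ : P * E₁ = E₂ * P) (hPM₁ : P * M₁ = M₂ * P) (hPE₂ : P * E₂ = E₁ * P)
    (hPM₂ : P * M₂ = M₁ * P) (hEE : Commute E₁ E₂) (hEM : Commute E₁ M₂) (hME : Commute M₁ E₂)
    (c u v : k) :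
    (v • E₂ + M₂) * (u • E₁ + M₁) * ((u - v) • 1 - c • P) -
        ((u - v) • 1 - c • P) * (u • E₁ + M₁) * (v • E₂ + M₂) =
      (u - v) • (M₂ * M₁ - M₁ * M₂ + c • (E₂ * M₁ - M₂ * E₁) * P) := by
  have hP₁ (t : k) : P * (t • E₁ + M₁) = (t • E₂ + M₂) * P := by
    rw [mul_add, mul_smul_comm, hPE₁, hPM₁, add_mul, smul_mul_assoc]
  have hP₂ (t : k) : P * (t • E₂ + M₂) = (t • E₁ + M₁) * P := by
    rw [mul_add, mul_smul_comm, hPE₂, hPM₂, add_mul, smul_mul_assoc]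
  have hcomm : (v • E₂ + M₂) * (u • E₁ + M₁) - (u • E₁ + M₁) * (v • E₂ + M₂) =
      M₂ * M₁ - M₁ * M₂ := by
    simp only [mul_add, add_mul, mul_smul_comm, smul_mul_assoc, hEE.eq, hEM.eq, hME.eq]
    module
  have hshift : (v • E₂ + M₂) * (u • E₁ + M₁) - (u • E₂ + M₂) * (v • E₁ + M₁) =
      (u - v) • (M₂ * E₁ - E₂ * M₁) := by
    simp only [mul_add, add_mul, mul_smul_comm, smul_mul_assoc]
    module
  calc _ = (u - v) • ((v • E₂ + M₂) * (u • E₁ + M₁) - (u • E₁ + M₁) * (v • E₂ + M₂)) -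
        c • (((v • E₂ + M₂) * (u • E₁ + M₁) - (u • E₂ + M₂) * (v • E₁ + M₁)) * P) := by
        simp only [mul_sub, sub_mul, mul_smul_comm, smul_mul_assoc, mul_one, one_mul, mul_assoc,
          hP₁, hP₂]
        module
    _ = _ := by
        rw [hcomm, hshift]
        simp only [smul_mul_assoc, sub_mul]
        module

theorem commute_kronecker_one_one_kronecker {R m n : Type*} [Semiring R] [Fintype m]
    [DecidableEq m] [Fintype n] [DecidableEq n] (A : Matrix m m R) (B : Matrix n n R)
    (h : ∀ i k j l, Commute (A i k) (B j l)) : Commute (A ⊗ₖ 1) (1 ⊗ₖ B) := by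
  ext ⟨i, j⟩ ⟨k, l⟩
  simpa [mul_apply, one_apply, Fintype.sum_prod_type] using (h i k j l).eq

section

variable {R : Type*} [Ring R] [Algebra ℂ R]

local notation "𝐏" => Pflip.map (algebraMap ℂ _)

theorem Rmat_map (w : ℂ) : (Rmat w).map (algebraMap ℂ R) = w • 1 - Complex.I • 𝐏 := by
  change (Algebra.ofId ℂ R).mapMatrix (Rmat w) = _
  simp only [Rmat, map_sub, map_smul, map_one]
  rfl

theorem Pflip_map_eq_toMatrix :
    (𝐏 : Matrix _ _ R) = (Equiv.prodComm (Fin 2) (Fin 2)).toPEquiv.toMatrix := by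
  ext ⟨i, j⟩ ⟨k, l⟩
  simp [Pflip, PEquiv.toMatrix_apply, Prod.ext_iff, eq_comm, and_comm]

theorem Pflip_map_mul_kronecker_one (A : Matrix (Fin 2) (Fin 2) R) :
    𝐏 * (A ⊗ₖ 1) = (1 ⊗ₖ A) * 𝐏 := by
  rw [Pflip_map_eq_toMatrix, PEquiv.toMatrix_toPEquiv_mul, PEquiv.mul_toMatrix_toPEquiv]
  ext ⟨i, j⟩ ⟨k, l⟩
  simp [one_apply]

theorem Pflip_map_mul_one_kronecker (A : Matrix (Fin 2) (Fin 2) R) :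
    𝐏 * (1 ⊗ₖ A) = (A ⊗ₖ 1) * 𝐏 := by
  rw [Pflip_map_eq_toMatrix, PEquiv.toMatrix_toPEquiv_mul, PEquiv.mul_toMatrix_toPEquiv]
  ext ⟨i, j⟩ ⟨k, l⟩
  simp [one_apply]

def rllDefect (E M : Matrix (Fin 2) (Fin 2) R) : Matrix (Fin 2 × Fin 2) (Fin 2 × Fin 2) R :=
  (1 ⊗ₖ M) * (M ⊗ₖ 1) - (M ⊗ₖ 1) * (1 ⊗ₖ M) +
    Complex.I • ((1 ⊗ₖ E) * (M ⊗ₖ 1) - (1 ⊗ₖ M) * (E ⊗ₖ 1)) * 𝐏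

variable {E : Matrix (Fin 2) (Fin 2) R}

theorem rll_sub_eq_smul_rllDefect (hE : ∀ i j x, Commute (E i j) x)
    (M : Matrix (Fin 2) (Fin 2) R) (u v : ℂ) :
    (1 ⊗ₖ (v • E + M)) * ((u • E + M) ⊗ₖ 1) * (Rmat (u - v)).map (algebraMap ℂ R) -
        (Rmat (u - v)).map (algebraMap ℂ R) * ((u • E + M) ⊗ₖ 1) * (1 ⊗ₖ (v • E + M)) =
      (u - v) • rllDefect E M := by
  simp only [Rmat_map, add_kronecker, kronecker_add, smul_kronecker, kronecker_smul]
  exact lax_rll_sub_eq_smul (Pflip_map_mul_kronecker_one E) (Pflip_map_mul_kronecker_one M)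
    (Pflip_map_mul_one_kronecker E) (Pflip_map_mul_one_kronecker M)
    (commute_kronecker_one_one_kronecker _ _ fun i k _ _ => hE i k _)
    (commute_kronecker_one_one_kronecker _ _ fun i k _ _ => hE i k _)
    (commute_kronecker_one_one_kronecker _ _ fun _ _ j l => (hE j l _).symm) Complex.I u v

theorem rll_iff_rllDefect_eq_zero (hE : ∀ i j x, Commute (E i j) x)
    (M : Matrix (Fin 2) (Fin 2) R) :
    (∀ u v : ℂ,
        (1 ⊗ₖ (v • E + M)) * ((u • E + M) ⊗ₖ 1) * (Rmat (u - v)).map (algebraMap ℂ R) =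
          (Rmat (u - v)).map (algebraMap ℂ R) * ((u • E + M) ⊗ₖ 1) * (1 ⊗ₖ (v • E + M))) ↔
      rllDefect E M = 0 := by
  constructor
  · intro h
    simpa using (rll_sub_eq_smul_rllDefect hE M 1 0).symm.trans (sub_eq_zero.2 (h 1 0))
  · intro h u v
    rw [← sub_eq_zero, rll_sub_eq_smul_rllDefect hE, h, smul_zero]

theorem rllDefect_toda_eq_zero_iff (p a b : R) :
    rllDefect !![1, 0; 0, 0] !![-p, -a; b, 0] = 0 ↔
      p * a - a * p = -(Complex.I • a) ∧ p * b - b * p = Complex.I • b ∧ a * b = b * a := by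
  simp only [← Matrix.ext_iff, Prod.forall, Fin.forall_fin_two]
  simp only [rllDefect, Pflip, Algebra.smul_mul_assoc, Fin.isValue, Matrix.add_apply,
    Matrix.sub_apply, mul_apply, kroneckerMap_apply, one_apply, of_apply, cons_val',
    cons_val_fin_one, cons_val_zero, ite_mul, one_mul, zero_mul, mul_ite, mul_one, mul_zero,
    Fintype.sum_prod_type, Finset.sum_ite_eq', Finset.mem_univ, ↓reduceIte, neg_mul,
    Finset.sum_ite_eq, mul_neg, neg_neg, Finset.sum_ite_irrel, Finset.sum_const_zero, sub_self,
    Matrix.smul_apply, map_apply, MonoidWithZeroHom.map_ite_one_zero, Fin.sum_univ_two, and_true,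
    sub_neg_eq_add, one_ne_zero, and_false, add_zero, neg_add_cancel, smul_zero, Matrix.zero_apply,
    cons_val_one, smul_neg, true_and, zero_ne_one, zero_add, zero_sub, ite_self, neg_zero, and_self]
  -- The nonzero entries give each of the three relations twice, with opposite signs.
  constructor
  · rintro ⟨⟨⟨-, hpa⟩, hpb, hab⟩, -, -⟩
    exact ⟨by linear_combination (norm := abel) hpa, by linear_combination (norm := abel) hpb,
      by linear_combination (norm := abel) hab⟩
  · rintro ⟨hpa, hpb, hab⟩
    refine ⟨⟨⟨?_, ?_⟩, ?_, ?_⟩, ?_, ?_⟩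
    · linear_combination (norm := abel) -hpa
    · linear_combination (norm := abel) hpa
    · linear_combination (norm := abel) hpb
    · linear_combination (norm := abel) hab
    · linear_combination (norm := abel) -hpb
    · linear_combination (norm := abel) -hab

end

theorem rll_iff_weyl_commutation
    (R : Type*) [Ring R] [Algebra ℂ R] (p : R) (a : Rˣ)
    (L : ℂ → Matrix (Fin 2) (Fin 2) R)
    (hL : ∀ u : ℂ, L u = !![algebraMap ℂ R u - p, -(a : R); ((a⁻¹ : Rˣ) : R), 0]) :
    (∀ u v : ℂ,
        ((1 : Matrix (Fin 2) (Fin 2) R) ⊗ₖ L v) * (L u ⊗ₖ (1 : Matrix (Fin 2) (Fin 2) R)) *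
            (Rmat (u - v)).map (algebraMap ℂ R) =
          (Rmat (u - v)).map (algebraMap ℂ R) * (L u ⊗ₖ (1 : Matrix (Fin 2) (Fin 2) R)) *
            ((1 : Matrix (Fin 2) (Fin 2) R) ⊗ₖ L v)) ↔
      p * (a : R) - (a : R) * p = -(algebraMap ℂ R Complex.I) * (a : R) := by
  have hL_linear (u : ℂ) : L u = u • !![1, 0; 0, 0] + !![-p, -(a : R); ↑a⁻¹, 0] := by
    rw [hL]
    ext i j
    fin_cases i <;> fin_cases j <;> simp [sub_eq_add_neg, Algebra.algebraMap_eq_smul_one]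
  have hE_central (i j : Fin 2) (x : R) : Commute ((!![1, 0; 0, 0] : Matrix _ _ R) i j) x := by
    fin_cases i <;> fin_cases j <;> simp
  simp only [hL_linear, rll_iff_rllDefect_eq_zero hE_central, rllDefect_toda_eq_zero_iff,
    ← Algebra.smul_def, neg_mul]
  refine ⟨fun h => h.1, fun h => ⟨h, ?_, by simp⟩⟩
  rw [Units.mul_inv_sub_inv_mul_eq_neg_smul (h.trans (neg_smul _ _).symm), neg_smul, neg_neg]
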